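/- Distilled counting core of Theorem 3: let n, m, k : ℕ, let H_n := EuclideanSpace ℂ ((Fin n → Bool) × Bool), and let 𝒰 be a finite set of continuous linear operators on H_n such that for every CNF_{n,m}^k-representable function f there exists U ∈ 𝒰 with ‖U − T_f‖ < √2/2 in operator norm. Then the cardinality of 𝒰 is at least Nat.choose (Nat.choose n k) m. Consequently, any collection of unitaries (e.g. those implementable by circuits of a given size from a fixed finite gate set) that √2/2-approximates every CNF_{n,m}^k oracle must be at least this numerous. -/

import Mathlib

/-- The oracle operator `T_f` on `H_n = EuclideanSpace ℂ ((Fin n → Bool) × Bool)`,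
given coordinatewise by `(T_f v) (x, c) = v (x, c ⊕ f x)`; it models the quantum
oracle `|x⟩|c⟩ ↦ |x⟩|c ⊕ f(x)⟩`. -/
noncomputable def oracleOp (n : ℕ) (f : (Fin n → Bool) → Bool) :
    EuclideanSpace ℂ ((Fin n → Bool) × Bool) →L[ℂ]
      EuclideanSpace ℂ ((Fin n → Bool) × Bool) :=
  LinearMap.toContinuousLinearMap
    { toFun := fun v => WithLp.toLp 2 (fun p : (Fin n → Bool) × Bool => v (p.1, xor p.2 (f p.1)))
      map_add' := by intro _ _; ext; simp
      map_smul' := by intro _ _; ext; simp }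
/-- A function is CNF-representable (m clauses, each with at most k literals;
a literal is a pair (i, b) asserting x i = b). -/
def CNFRepresentable (n m k : ℕ) (f : (Fin n → Bool) → Bool) : Prop :=
  ∃ C : Fin m → Finset (Fin n × Bool),
    (∀ j : Fin m, (C j).card ≤ k) ∧
    ∀ x : Fin n → Bool, (f x = true ↔ ∀ j : Fin m, ∃ l ∈ C j, x l.1 = l.2)

/-! Oracles of different functions are at operator-norm distance at least `√2` from each other,
so an operator `√2/2`-close to one oracle is close to no other; a finite family approximating
every oracle of a class of functions is therefore at least as large as the class. The class
used is that of the monotone CNFs whose clauses are `m` distinct `k`-subsets of the variables: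
such a CNF determines its set of clauses, since for each clause `t` the assignment vanishing
exactly on `t` falsifies it, and no other clause is contained in `t`. -/

open scoped ComplexInnerProductSpace

theorem Finset.card_le_card_of_forall_exists_dist_lt {α E : Type*} [PseudoMetricSpace E]
    {s : Finset α} {𝒰 : Finset E} {F : α → E} {r : ℝ}
    (hsep : ∀ a ∈ s, ∀ b ∈ s, a ≠ b → 2 * r ≤ dist (F a) (F b))
    (happrox : ∀ a ∈ s, ∃ U ∈ 𝒰, dist U (F a) < r) :
    s.card ≤ 𝒰.card := by
  choose φ hφ𝒰 hφdist using happrox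
  rw [← Finset.card_attach]
  refine Finset.card_le_card_of_injOn (fun a => φ a a.2) (fun a _ => hφ𝒰 a a.2)
    fun ⟨a, ha⟩ _ ⟨b, hb⟩ _ hab => Subtype.ext ?_
  by_contra hne
  refine (hsep a ha b hb hne).not_gt ?_
  calc dist (F a) (F b) ≤ dist (φ a ha) (F a) + dist (φ b hb) (F b) := by
        rw [show φ a ha = φ b hb from hab]; exact dist_triangle_left _ _ _
    _ < 2 * r := by linarith [hφdist a ha, hφdist b hb]

section Oracle

variable {n : ℕ}

theorem oracleOp_single_false (f : (Fin n → Bool) → Bool) (x : Fin n → Bool) :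
    oracleOp n f (EuclideanSpace.single (x, false) 1) = EuclideanSpace.single (x, f x) 1 := by
  ext ⟨y, c⟩
  change EuclideanSpace.single (x, false) (1 : ℂ) (y, xor c (f y)) = _
  by_cases hyx : y = x
  · subst hyx
    cases c <;> cases f y <;> simp
  · simp [hyx]

theorem sqrt_two_le_norm_oracleOp_sub {f g : (Fin n → Bool) → Bool} (hfg : f ≠ g) :
    √2 ≤ ‖oracleOp n f - oracleOp n g‖ := by
  obtain ⟨x, hx⟩ := Function.ne_iff.mp hfg
  set e : (Fin n → Bool) × Bool → EuclideanSpace ℂ ((Fin n → Bool) × Bool) :=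
    fun p => EuclideanSpace.single p 1
  have horth : ⟪e (x, f x), e (x, g x)⟫ = 0 := by
    simp [e, EuclideanSpace.inner_single_left, hx]
  have hnorm : ‖e (x, f x) - e (x, g x)‖ = √2 := by
    rw [← Real.sqrt_sq (norm_nonneg _), @norm_sub_sq ℂ, horth]
    norm_num [e]
  calc √2 = ‖(oracleOp n f - oracleOp n g) (e (x, false))‖ := by
        rw [sub_apply, oracleOp_single_false, oracleOp_single_false, hnorm]
    _ ≤ ‖oracleOp n f - oracleOp n g‖ * ‖e (x, false)‖ := ContinuousLinearMap.le_opNorm _ _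
    _ = ‖oracleOp n f - oracleOp n g‖ := by simp [e]

end Oracle

section MonotoneCNF

variable {ι : Type*}

def monotoneCNF (S : Finset (Finset ι)) (x : ι → Bool) : Bool :=
  decide (∀ t ∈ S, ∃ i ∈ t, x i = true)

open Classical in
theorem monotoneCNF_compl_eq_false_iff (S : Finset (Finset ι)) (t : Finset ι) :
    monotoneCNF S (fun i => decide (i ∉ t)) = false ↔ ∃ t' ∈ S, t' ⊆ t := by
  simp [monotoneCNF, Finset.subset_iff]

theorem monotoneCNF_injOn :
    {S : Finset (Finset ι) | IsAntichain (· ⊆ ·) (S : Set (Finset ι))}.InjOn monotoneCNF := by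
  suffices ∀ S T : Finset (Finset ι), IsAntichain (· ⊆ ·) (S : Set (Finset ι)) →
      monotoneCNF S = monotoneCNF T → S ⊆ T from
    fun S hS T hT hST => (this S T hS hST).antisymm (this T S hT hST.symm)
  intro S T hS hST t ht
  classical
  obtain ⟨t', ht'T, ht't⟩ := (monotoneCNF_compl_eq_false_iff T t).mp <| by
    rw [← hST, monotoneCNF_compl_eq_false_iff]
    exact ⟨t, ht, subset_rfl⟩
  obtain ⟨t'', ht''S, ht''t'⟩ := (monotoneCNF_compl_eq_false_iff S t').mp <| by
    rw [hST, monotoneCNF_compl_eq_false_iff]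
    exact ⟨t', ht'T, subset_rfl⟩
  obtain rfl : t'' = t := hS.eq ht''S ht (ht''t'.trans ht't)
  rwa [ht''t'.antisymm ht't]

theorem cnfRepresentable_monotoneCNF {n m k : ℕ} {S : Finset (Finset (Fin n))}
    (hSm : S.card = m) (hSk : ∀ t ∈ S, t.card ≤ k) :
    CNFRepresentable n m k (monotoneCNF S) := by
  let e : Fin m ≃ S := (S.equivFin.trans (finCongr hSm)).symm
  refine ⟨fun j => (e j : Finset (Fin n)).map ⟨(·, true), fun _ _ h => (Prod.mk.inj h).1⟩,
    fun j => by simpa using hSk _ (e j).2, fun x => ?_⟩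
  simp only [monotoneCNF, decide_eq_true_iff, Finset.mem_map]
  constructor
  · intro hx j
    obtain ⟨i, hi, hxi⟩ := hx _ (e j).2
    exact ⟨_, ⟨i, hi, rfl⟩, hxi⟩
  · intro hx t ht
    obtain ⟨_, ⟨i, hi, rfl⟩, hxi⟩ := hx (e.symm ⟨t, ht⟩)
    exact ⟨i, by simpa using hi, hxi⟩

end MonotoneCNF

/-- Distilled counting core of Theorem 3: any finite set of operators that
approximates the oracle of every CNF-representable function to within
operator-norm error < sqrt(2)/2 has at least (C(n,k) choose m) elements. -/
theorem counting_lower_bound (n m k : ℕ)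
    (𝒰 : Finset (EuclideanSpace ℂ ((Fin n → Bool) × Bool) →L[ℂ]
      EuclideanSpace ℂ ((Fin n → Bool) × Bool)))
    (h : ∀ f : (Fin n → Bool) → Bool, CNFRepresentable n m k f →
      ∃ U ∈ 𝒰, ‖U - oracleOp n f‖ < Real.sqrt 2 / 2) :
    Nat.choose (Nat.choose n k) m ≤ 𝒰.card := by
  set B := Finset.powersetCard m (Finset.powersetCard k (Finset.univ : Finset (Fin n)))
  have hB : ∀ S ∈ B, S.card = m ∧ ∀ t ∈ S, t.card = k := fun S hS => by
    simp only [B, Finset.mem_powersetCard] at hS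
    exact ⟨hS.2, fun t ht => (Finset.mem_powersetCard.mp (hS.1 ht)).2⟩
  have hantichain : ∀ S ∈ B, IsAntichain (· ⊆ ·) (S : Set (Finset (Fin n))) :=
    fun S hS => Set.Sized.isAntichain (r := k) fun t ht => (hB S hS).2 t ht
  calc Nat.choose (Nat.choose n k) m = B.card := by simp [B, Finset.card_powersetCard]
    _ ≤ 𝒰.card := by
      refine Finset.card_le_card_of_forall_exists_dist_lt (F := oracleOp n ∘ monotoneCNF)
        (r := √2 / 2) (fun S hS T hT hST => ?_) fun S hS => ?_
      · rw [mul_div_cancel₀ _ two_ne_zero, dist_eq_norm]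
        exact sqrt_two_le_norm_oracleOp_sub
          (hST ∘ monotoneCNF_injOn (hantichain S hS) (hantichain T hT))
      · simpa only [dist_eq_norm, Function.comp_apply] using
          h _ (cnfRepresentable_monotoneCNF (hB S hS).1 fun t ht => ((hB S hS).2 t ht).le)
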